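/- arXiv:1102.5306 — 2 statements merged into one kernel-verified Lean document; each statement's English description precedes it below -/
import Mathlib

section
/- Let ρ: [0,∞) → [0,1] be increasing, and suppose that for all constants 0 ≤ a < b, and for every sequence ε(n) → 0, the following 'no-jump' property holds for a sequence of random graph processes: the probability that there exist m₁ < m₂ ≤ m₁ + ε(n)·n with L₁(G(m₁)) ≤ a·n and L₁(G(m₂)) ≥ b·n tends to 0. If additionally L₁(G(⌊tn⌋))/n → ρ(t) in probability at every continuity point t of ρ, and ρ(0) = 0 with ρ(t) ≤ Ct near 0, then ρ is continuous on [0,∞). -/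
/-!
Extend `ρ` monotonically to all of `ℝ`. At `0` continuity comes from `0 ≤ ρ t ≤ C t`. A
discontinuity at `t > 0` is a jump from the left limit `L` to the right limit `R > L`. Continuity
points of a monotone function are dense, so for every `ε > 0` there are continuity points
`s₁ < t < s₂` with `s₂ - s₁ < ε`; convergence in probability at `s₁` and `s₂` then says that whp
`L₁` is below `(L + δ) n` at time `⌊s₁ n⌋` and above `(R - δ) n` at time `⌊s₂ n⌋`, a jump within
a window of length `ε n`. Letting `ε = ε(n) → 0` slowly enough contradicts the no-jump property.
-/

open MeasureTheory Filter

/-- The size of the connected component of `G` containing `v`. -/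
noncomputable def compSize {n : ℕ} (G : SimpleGraph (Fin n)) (v : Fin n) : ℕ :=
  Set.ncard {u | G.Reachable v u}

/-- The order of the largest connected component of `G`. -/
noncomputable def L1 {n : ℕ} (G : SimpleGraph (Fin n)) : ℕ :=
  Finset.univ.sup (compSize G)

open Set Topology
open scoped ENNReal

lemma exists_tendsto_atTop_eventually_apply {q : ℕ → ℕ → Prop}
    (h : ∀ k, ∀ᶠ n in atTop, q k n) :
    ∃ κ : ℕ → ℕ, Tendsto κ atTop atTop ∧ ∀ᶠ n in atTop, q (κ n) n := by
  choose N hN using fun k => eventually_atTop.1 (h k)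
  refine ⟨fun n => Nat.findGreatest (fun k => N k ≤ n) n, ?_, ?_⟩
  · exact tendsto_atTop.2 fun k => eventually_atTop.2 ⟨max k (N k), fun n hn =>
      Nat.le_findGreatest (le_of_max_le_left hn) (le_of_max_le_right hn)⟩
  · exact eventually_atTop.2 ⟨N 0, fun n hn =>
      hN _ n (Nat.findGreatest_spec (P := fun k => N k ≤ n) (Nat.zero_le n) hn)⟩

lemma exists_tendsto_zero_eventually_apply {q : ℝ → ℕ → Prop}
    (h : ∀ ε > 0, ∀ᶠ n in atTop, q ε n) :
    ∃ εseq : ℕ → ℝ, Tendsto εseq atTop (𝓝 0) ∧ ∀ᶠ n in atTop, q (εseq n) n := by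
  obtain ⟨κ, hκ, hq⟩ :=
    exists_tendsto_atTop_eventually_apply fun k => h (1 / ((k : ℝ) + 1)) Nat.one_div_pos_of_nat
  exact ⟨_, tendsto_one_div_add_atTop_nhds_zero_nat.comp hκ, hq⟩

lemma eventually_floor_mul_lt_floor_mul {s₁ s₂ ε : ℝ} (hs₁ : 0 ≤ s₁) (hs : s₁ < s₂)
    (hε : s₂ - s₁ < ε) :
    ∀ᶠ n : ℕ in atTop, ⌊s₁ * n⌋₊ < ⌊s₂ * n⌋₊ ∧ (⌊s₂ * n⌋₊ : ℝ) ≤ ⌊s₁ * n⌋₊ + ε * n := by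
  have hgrow : ∀ c : ℝ, 0 < c → ∀ᶠ n : ℕ in atTop, 1 < c * n := fun c hc =>
    (tendsto_natCast_atTop_atTop.const_mul_atTop hc).eventually_gt_atTop 1
  filter_upwards [hgrow _ (sub_pos.2 hs), hgrow _ (sub_pos.2 hε)] with n hn₁ hn₂
  have h₁ : (⌊s₁ * n⌋₊ : ℝ) ≤ s₁ * n := Nat.floor_le (by positivity)
  have h₁' : s₁ * n < ⌊s₁ * n⌋₊ + 1 := Nat.lt_floor_add_one _
  have h₂ : (⌊s₂ * n⌋₊ : ℝ) ≤ s₂ * n := Nat.floor_le (by nlinarith)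
  have h₂' : s₂ * n - 1 < ⌊s₂ * n⌋₊ := Nat.sub_one_lt_floor _
  exact ⟨by exact_mod_cast (by linarith : (⌊s₁ * n⌋₊ : ℝ) < ⌊s₂ * n⌋₊), by linarith⟩

namespace Monotone

variable {f : ℝ → ℝ}

lemma exists_gap_of_not_continuousAt (hf : Monotone f) {x : ℝ} (h : ¬ContinuousAt f x) :
    ∃ L R, L < R ∧ (∀ y < x, f y ≤ L) ∧ ∀ y > x, R ≤ f y :=
  ⟨Function.leftLim f x, Function.rightLim f x,
    (hf.leftLim_le_rightLim le_rfl).lt_of_ne (mt hf.continuousAt_iff_leftLim_eq_rightLim.2 h),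
    fun _ hy => hf.le_leftLim hy, fun _ hy => hf.rightLim_le hy⟩

lemma exists_continuousAt_mem_Ioo (hf : Monotone f) {a b : ℝ} (h : a < b) :
    ∃ s ∈ Ioo a b, ContinuousAt f s := by
  obtain ⟨s, hs, hmem⟩ := (hf.countable_not_continuousAt.dense_compl ℝ).exists_mem_open
    isOpen_Ioo (nonempty_Ioo.2 h)
  exact ⟨s, hmem, not_not.1 hs⟩

end Monotone

section RandomProcess

variable {Ω : ℕ → Type*} [∀ n, MeasurableSpace (Ω n)] (P : ∀ n, Measure (Ω n))
  (X : ∀ n, Ω n → ℕ → ℝ)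

def jumpEvent (n : ℕ) (a b ε : ℝ) : Set (Ω n) :=
  {ω | ∃ m₁ m₂ : ℕ, m₁ < m₂ ∧ (m₂ : ℝ) ≤ (m₁ : ℝ) + ε * n ∧
    X n ω m₁ ≤ a * n ∧ b * n ≤ X n ω m₂}

def NoJump : Prop :=
  ∀ a b : ℝ, 0 ≤ a → a < b → ∀ εseq : ℕ → ℝ, Tendsto εseq atTop (𝓝 0) →
    Tendsto (fun n => P n (jumpEvent X n a b (εseq n))) atTop (𝓝 0)

/-- `X n ⌊t n⌋ / n → x` in probability. -/
def ScaledTendstoInProb (t x : ℝ) : Prop :=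
  ∀ δ : ℝ, 0 < δ → Tendsto (fun n => P n {ω | δ < |X n ω ⌊t * n⌋₊ / n - x|}) atTop (𝓝 0)

variable [∀ n, IsProbabilityMeasure (P n)]

lemma tendsto_measure_jumpEvent_one {s₁ s₂ x₁ x₂ a b ε δ : ℝ} (hs₁ : 0 ≤ s₁) (hs : s₁ < s₂)
    (hε : s₂ - s₁ < ε) (h₁ : ScaledTendstoInProb P X s₁ x₁) (h₂ : ScaledTendstoInProb P X s₂ x₂)
    (hδ : 0 < δ) (ha : x₁ + δ ≤ a) (hb : b ≤ x₂ - δ) :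
    Tendsto (fun n => P n (jumpEvent X n a b ε)) atTop (𝓝 1) := by
  set A := fun n => {ω : Ω n | δ < |X n ω ⌊s₁ * n⌋₊ / n - x₁|}
  set B := fun n => {ω : Ω n | δ < |X n ω ⌊s₂ * n⌋₊ / n - x₂|}
  have hcover : ∀ᶠ n in atTop, (jumpEvent X n a b ε)ᶜ ⊆ A n ∪ B n := by
    filter_upwards [eventually_floor_mul_lt_floor_mul hs₁ hs hε,
      tendsto_natCast_atTop_atTop.eventually_gt_atTop (0 : ℝ)] with n ⟨hlt, hle⟩ hn ω hω
    by_contra hAB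
    simp only [mem_union, not_or, A, B, mem_ofPred_eq, not_lt, abs_le] at hAB
    refine hω ⟨_, _, hlt, hle, ?_, ?_⟩
    · exact (div_le_iff₀ hn).1 (by linarith [hAB.1.2])
    · exact (le_div_iff₀ hn).1 (by linarith [hAB.2.1])
  have hlower : ∀ᶠ n in atTop, 1 - (P n (A n) + P n (B n)) ≤ P n (jumpEvent X n a b ε) := by
    filter_upwards [hcover] with n hsub
    rw [tsub_le_iff_right]
    calc (1 : ℝ≥0∞) = P n (jumpEvent X n a b ε ∪ (jumpEvent X n a b ε)ᶜ) := by
          rw [union_compl_self, measure_univ]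
      _ ≤ P n (jumpEvent X n a b ε) + P n (A n ∪ B n) :=
          (measure_union_le _ _).trans (by gcongr)
      _ ≤ _ := by gcongr; exact measure_union_le _ _
  have hA_B : Tendsto (fun n => 1 - (P n (A n) + P n (B n))) atTop (𝓝 1) := by
    simpa using ENNReal.Tendsto.sub tendsto_const_nhds ((h₁ δ hδ).add (h₂ δ hδ))
      (Or.inl ENNReal.one_ne_top)
  exact tendsto_of_tendsto_of_tendsto_of_le_of_le' hA_B tendsto_const_nhds hlower
    (Eventually.of_forall fun n => prob_le_one)

variable {P X}

theorem _root_.Monotone.continuousAt_of_noJump {f : ℝ → ℝ} (hf : Monotone f) (hf0 : 0 ≤ f 0)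
    (hjump : NoJump P X)
    (hconv : ∀ s, 0 < s → ContinuousAt f s → ScaledTendstoInProb P X s (f s))
    {t : ℝ} (ht : 0 < t) : ContinuousAt f t := by
  by_contra hcont
  obtain ⟨L, R, hLR, hL, hR⟩ := hf.exists_gap_of_not_continuousAt hcont
  obtain ⟨δ, hδ, hab⟩ : ∃ δ > 0, L + δ < R - δ := ⟨(R - L) / 3, by linarith, by linarith⟩
  have hL0 : 0 ≤ L := hf0.trans (hL 0 ht)
  have hlikely : ∀ ε > 0, ∀ᶠ n in atTop, 2⁻¹ < P n (jumpEvent X n (L + δ) (R - δ) ε) := by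
    intro ε hε
    obtain ⟨s₁, ⟨hs₁l, hs₁t⟩, hc₁⟩ :=
      hf.exists_continuousAt_mem_Ioo (max_lt (by linarith) ht : max (t - ε / 2) 0 < t)
    obtain ⟨s₂, ⟨hts₂, hs₂r⟩, hc₂⟩ := hf.exists_continuousAt_mem_Ioo (by linarith : t < t + ε / 2)
    have hs₁ : 0 < s₁ := (le_max_right _ _).trans_lt hs₁l
    have hwin : s₂ - s₁ < ε := by linarith [le_max_left (t - ε / 2) 0]
    exact (tendsto_measure_jumpEvent_one P X hs₁.le (hs₁t.trans hts₂) hwin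
      (hconv s₁ hs₁ hc₁) (hconv s₂ (ht.trans hts₂) hc₂) hδ (by linarith [hL s₁ hs₁t])
      (by linarith [hR s₂ hts₂])).eventually (lt_mem_nhds ENNReal.one_half_lt_one)
  obtain ⟨εseq, hεseq, hεlikely⟩ := exists_tendsto_zero_eventually_apply hlikely
  have hunlikely := (hjump (L + δ) (R - δ) (by linarith) hab εseq hεseq).eventually
    (gt_mem_nhds (ENNReal.inv_pos.2 ENNReal.ofNat_ne_top : (0 : ℝ≥0∞) < 2⁻¹))
  obtain ⟨n, h₁, h₂⟩ := (hεlikely.and hunlikely).exists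
  exact lt_asymm h₁ h₂

end RandomProcess

lemma continuousWithinAt_Ici_zero_of_le_mul {f : ℝ → ℝ} (h0 : f 0 = 0)
    (hnonneg : ∀ t, 0 ≤ t → 0 ≤ f t)
    (hlin : ∃ C : ℝ, ∃ δ > (0 : ℝ), ∀ t : ℝ, 0 ≤ t → t < δ → f t ≤ C * t) :
    ContinuousWithinAt f (Ici 0) 0 := by
  obtain ⟨C, δ, hδ, hC⟩ := hlin
  have hlinear : Tendsto (fun t : ℝ => C * t) (𝓝[Ici 0] 0) (𝓝 0) := by
    simpa using ((continuous_const_mul C).tendsto 0).mono_left nhdsWithin_le_nhds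
  have hsmall : ∀ᶠ t in 𝓝[Ici 0] (0 : ℝ), t < δ :=
    eventually_nhdsWithin_of_eventually_nhds (eventually_lt_nhds hδ)
  rw [ContinuousWithinAt, h0]
  exact tendsto_of_tendsto_of_tendsto_of_le_of_le' tendsto_const_nhds hlinear
    (eventually_nhdsWithin_of_forall hnonneg)
    (by filter_upwards [self_mem_nhdsWithin, hsmall] with t ht hδt using hC t ht hδt)

theorem stmt15_general
    (Ω : ℕ → Type*) [∀ n, MeasurableSpace (Ω n)]
    (P : ∀ n, Measure (Ω n)) [∀ n, IsProbabilityMeasure (P n)]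
    (G : ∀ n : ℕ, Ω n → ℕ → SimpleGraph (Fin n))
    (ρ : ℝ → ℝ) (hmono : MonotoneOn ρ (Set.Ici 0))
    (hρ0 : ρ 0 = 0)
    (hlin : ∃ C : ℝ, ∃ δ > (0:ℝ), ∀ t : ℝ, 0 ≤ t → t < δ → ρ t ≤ C * t)
    (hnojump : ∀ a b : ℝ, 0 ≤ a → a < b → ∀ εseq : ℕ → ℝ,
      Tendsto εseq atTop (nhds 0) →
      Tendsto (fun n => P n
          {ω | ∃ m₁ m₂ : ℕ, m₁ < m₂ ∧ (m₂ : ℝ) ≤ (m₁ : ℝ) + εseq n * n ∧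
            (L1 (G n ω m₁) : ℝ) ≤ a * n ∧ b * n ≤ (L1 (G n ω m₂) : ℝ)})
        atTop (nhds 0))
    (hconv : ∀ t : ℝ, 0 ≤ t → ContinuousWithinAt ρ (Set.Ici 0) t →
      ∀ δ : ℝ, 0 < δ →
      Tendsto (fun n => P n
          {ω | δ < |(L1 (G n ω ⌊t * n⌋₊) : ℝ) / n - ρ t|}) atTop (nhds 0)) :
    ContinuousOn ρ (Set.Ici 0) := by
  set ρ' := IciExtend ((Ici (0 : ℝ)).domRestrict ρ)
  have hρ' : Monotone ρ' := (monotoneOn_iff_monotone.1 hmono).IciExtend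
  have heq : EqOn ρ' ρ (Ici 0) := fun x hx => IciExtend_of_mem _ hx
  have hnear : ∀ s > 0, ρ' =ᶠ[𝓝 s] ρ := fun s hs => heq.eventuallyEq_of_mem (Ici_mem_nhds hs)
  intro t ht
  rcases (mem_Ici.1 ht).eq_or_lt with rfl | ht
  · exact continuousWithinAt_Ici_zero_of_le_mul hρ0
      (fun s hs => hρ0 ▸ hmono self_mem_Ici hs hs) hlin
  · refine ((continuousAt_congr (hnear t ht)).1 ?_).continuousWithinAt
    refine hρ'.continuousAt_of_noJump (X := fun n ω m => (L1 (G n ω m) : ℝ))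
      (heq self_mem_Ici ▸ hρ0.ge) hnojump (fun s hs hc => ?_) ht
    rw [heq hs.le]
    exact hconv s hs.le ((continuousAt_congr (hnear s hs)).1 hc).continuousWithinAt

/-- If `ρ : [0,∞) → [0,1]` is increasing with `ρ(0) = 0` and `ρ(t) ≤ Ct` near `0`, the
process satisfies the no-jump property (for all `0 ≤ a < b` and all sequences `ε(n) → 0`,
whp there are no `m₁ < m₂ ≤ m₁ + ε(n)·n` with `L₁(G(m₁)) ≤ a·n` and `L₁(G(m₂)) ≥ b·n`),
and `L₁(G(⌊tn⌋))/n → ρ(t)` in probability at every continuity point `t` of `ρ`, then `ρ`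
is continuous on `[0,∞)`. -/
theorem stmt15
    (Ω : ℕ → Type*) [∀ n, MeasurableSpace (Ω n)]
    (P : ∀ n, Measure (Ω n)) [∀ n, IsProbabilityMeasure (P n)]
    (G : ∀ n : ℕ, Ω n → ℕ → SimpleGraph (Fin n))
    (ρ : ℝ → ℝ) (hmono : MonotoneOn ρ (Set.Ici 0))
    (hmap : ∀ t : ℝ, 0 ≤ t → ρ t ∈ Set.Icc (0 : ℝ) 1)
    (hρ0 : ρ 0 = 0)
    (hlin : ∃ C : ℝ, ∃ δ > (0:ℝ), ∀ t : ℝ, 0 ≤ t → t < δ → ρ t ≤ C * t)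
    (hnojump : ∀ a b : ℝ, 0 ≤ a → a < b → ∀ εseq : ℕ → ℝ,
      Tendsto εseq atTop (nhds 0) →
      Tendsto (fun n => P n
          {ω | ∃ m₁ m₂ : ℕ, m₁ < m₂ ∧ (m₂ : ℝ) ≤ (m₁ : ℝ) + εseq n * n ∧
            (L1 (G n ω m₁) : ℝ) ≤ a * n ∧ b * n ≤ (L1 (G n ω m₂) : ℝ)})
        atTop (nhds 0))
    (hconv : ∀ t : ℝ, 0 ≤ t → ContinuousWithinAt ρ (Set.Ici 0) t →
      ∀ δ : ℝ, 0 < δ →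
      Tendsto (fun n => P n
          {ω | δ < |(L1 (G n ω ⌊t * n⌋₊) : ℝ) / n - ρ t|}) atTop (nhds 0)) :
    ContinuousOn ρ (Set.Ici 0) :=
  stmt15_general Ω P G ρ hmono hρ0 hlin hnojump hconv
end

section
/- Let (E_j)_{j≥1} be events adapted to a filtration (F_j) such that on a decreasing sequence of 'not yet done' events D_{j−1} ∈ F_{j−1} we have P(E_j | F_{j−1}) ≥ p, and such that the total number of j ≤ Δ with E_j occurring while D_{j−1} holds is deterministically at most T (after which D fails). If Δ·p ≥ 2(T+1)·2, i.e. Δ ≥ 4(T+1)/p, then P(D_Δ) ≤ exp(−Δp/8), i.e., with probability at least 1 − e^{−Δp/8} the process is 'done' within Δ steps. -/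
/-!
Weight the event `D n` by `2^{-N n}`, where `N n = goodStepCount D E n ω` counts the good
steps up to time `n`. On `D n`
a good step at time `n + 1` halves the weight and happens with conditional probability at least
`p`, so the expected weight shrinks by a factor `1 - p/2 ≤ exp(-p/2)` per step and is at most
`exp(-Δp/2)` at time `Δ`. On `D Δ` at most `T` steps were good, so the weight there is at least
`2^{-T}`; hence `P(D Δ) ≤ 2^T exp(-Δp/2)`, and `T < Δp/4` turns this into `exp(-Δp/8)`.
-/

open MeasureTheory Finset
open scoped Classical

theorem mul_integral_le_integral_indicator_of_le_condExp {Ω : Type*} {m m0 : MeasurableSpace Ω}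
    {P : Measure Ω} [IsFiniteMeasure P] (hm : m ≤ m0) {X : Ω → ℝ} {E : Set Ω} {p : ℝ}
    (hX : StronglyMeasurable[m] X) (hXint : Integrable X P) (hX0 : 0 ≤ X)
    (hE : MeasurableSet E)
    (hp : ∀ᵐ ω ∂P, X ω ≠ 0 → p ≤ P[E.indicator (fun _ => (1 : ℝ)) | m] ω) :
    p * ∫ ω, X ω ∂P ≤ ∫ ω, E.indicator X ω ∂P := by
  set e := E.indicator (fun _ => (1 : ℝ))
  have hXe : E.indicator X = X * e := by
    ext ω; by_cases h : ω ∈ E <;> simp [e, h]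
  have hpull : P[X * e | m] =ᵐ[P] X * P[e | m] :=
    condExp_mul_of_stronglyMeasurable_left hX (hXe ▸ hXint.indicator hE)
      ((integrable_const 1).indicator hE)
  have hbound : ∀ᵐ ω ∂P, p * X ω ≤ X ω * P[e | m] ω := by
    filter_upwards [hp] with ω hω
    by_cases hXω : X ω = 0
    · simp [hXω]
    · rw [mul_comm]; exact mul_le_mul_of_nonneg_left (hω hXω) (hX0 ω)
  calc p * ∫ ω, X ω ∂P = ∫ ω, p * X ω ∂P := (integral_const_mul p _).symm
    _ ≤ ∫ ω, (X * P[e | m]) ω ∂P :=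
      integral_mono_ae (hXint.const_mul p) (integrable_condExp.congr hpull) hbound
    _ = ∫ ω, P[X * e | m] ω ∂P := integral_congr_ae hpull.symm
    _ = ∫ ω, E.indicator X ω ∂P := by rw [integral_condExp hm, hXe]

theorem two_pow_mul_exp_le_exp {T : ℕ} {x : ℝ} (hx : 4 * ((T : ℝ) + 1) ≤ x) :
    (2 : ℝ) ^ T * Real.exp (-x / 2) ≤ Real.exp (-x / 8) := by
  have hlog : Real.log 2 < 1 := by linarith [Real.log_two_lt_d9]
  have hT : (T : ℝ) * Real.log 2 ≤ T := by
    nlinarith [(T.cast_nonneg : (0 : ℝ) ≤ T)]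
  have h2 : (2 : ℝ) ^ T = Real.exp (T * Real.log 2) := by
    rw [Real.exp_nat_mul, Real.exp_log two_pos]
  rw [h2, ← Real.exp_add, Real.exp_le_exp]
  linarith

section GoodSteps

variable {Ω : Type*} (D E : ℕ → Set Ω)

noncomputable def goodStepCount (n : ℕ) (ω : Ω) : ℕ := #{j ∈ Icc 1 n | ω ∈ E j ∧ ω ∈ D (j - 1)}

noncomputable def survivalWeight (n : ℕ) : Ω → ℝ :=
  (D n).indicator fun ω => (2⁻¹ : ℝ) ^ goodStepCount D E n ω

variable {D E}

theorem goodStepCount_succ {n : ℕ} {ω : Ω} (hω : ω ∈ D n) :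
    goodStepCount D E (n + 1) ω = goodStepCount D E n ω + if ω ∈ E (n + 1) then 1 else 0 := by
  simp only [goodStepCount, card_filter, sum_Icc_succ_top (Nat.le_add_left 1 n),
    Nat.add_sub_cancel, hω, and_true]

theorem survivalWeight_nonneg (n : ℕ) : 0 ≤ survivalWeight D E n :=
  fun _ => Set.indicator_nonneg (fun _ _ => by positivity) _

theorem survivalWeight_le_one (n : ℕ) (ω : Ω) : survivalWeight D E n ω ≤ 1 := by
  unfold survivalWeight
  exact Set.indicator_apply_le' (fun _ => pow_le_one₀ (by norm_num) (by norm_num))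
    (fun _ => zero_le_one)

theorem survivalWeight_zero : survivalWeight D E 0 = (D 0).indicator fun _ => 1 := by
  simp [survivalWeight, goodStepCount]

theorem survivalWeight_succ_le {n : ℕ} (hDdec : D (n + 1) ⊆ D n) (ω : Ω) :
    survivalWeight D E (n + 1) ω ≤
      survivalWeight D E n ω - 2⁻¹ * (E (n + 1)).indicator (survivalWeight D E n) ω := by
  by_cases hω : ω ∈ D (n + 1)
  · have hω' := hDdec hω
    have hW : survivalWeight D E n ω = 2⁻¹ ^ goodStepCount D E n ω := Set.indicator_of_mem hω' _
    rw [survivalWeight, Set.indicator_of_mem hω, goodStepCount_succ hω']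
    by_cases hωE : ω ∈ E (n + 1)
    · rw [Set.indicator_of_mem hωE, hW, if_pos hωE, pow_succ]; exact le_of_eq (by ring)
    · rw [Set.indicator_of_notMem hωE, hW, if_neg hωE]; exact le_of_eq (by ring)
  · have hW : 0 ≤ survivalWeight D E n ω := survivalWeight_nonneg n ω
    have hWE : (E (n + 1)).indicator (survivalWeight D E n) ω ≤ survivalWeight D E n ω :=
      Set.indicator_le_self' (fun _ _ => survivalWeight_nonneg n _) ω
    rw [survivalWeight, Set.indicator_of_notMem hω]
    linarith

variable {m0 : MeasurableSpace Ω} (ℱ : Filtration ℕ m0)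

theorem measurable_goodStepCount (hD : ∀ j, MeasurableSet[ℱ j] (D j))
    (hE : ∀ j, MeasurableSet[ℱ j] (E j)) (n : ℕ) : Measurable[ℱ n] (goodStepCount D E n) := by
  unfold goodStepCount
  simp_rw [card_filter]
  refine Finset.measurable_sum _ fun j hj => Measurable.ite ?_ measurable_const measurable_const
  have hjn : j ≤ n := (Finset.mem_Icc.1 hj).2
  exact (ℱ.mono hjn _ (hE j)).inter (ℱ.mono (j.sub_le 1 |>.trans hjn) _ (hD (j - 1)))

theorem stronglyMeasurable_survivalWeight (hD : ∀ j, MeasurableSet[ℱ j] (D j))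
    (hE : ∀ j, MeasurableSet[ℱ j] (E j)) (n : ℕ) :
    StronglyMeasurable[ℱ n] (survivalWeight D E n) :=
  ((measurable_from_nat.comp (measurable_goodStepCount ℱ hD hE n)).indicator
    (hD n)).stronglyMeasurable

theorem integrable_survivalWeight {P : Measure Ω} [IsFiniteMeasure P]
    (hD : ∀ j, MeasurableSet[ℱ j] (D j)) (hE : ∀ j, MeasurableSet[ℱ j] (E j)) (n : ℕ) :
    Integrable (survivalWeight D E n) P :=
  .of_bound ((stronglyMeasurable_survivalWeight ℱ hD hE n).mono (ℱ.le n)).aestronglyMeasurable 1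
    (.of_forall fun ω => by
      rw [Real.norm_of_nonneg (survivalWeight_nonneg n ω)]; exact survivalWeight_le_one n ω)

theorem integral_survivalWeight_succ_le {P : Measure Ω} [IsFiniteMeasure P] {p : ℝ}
    (hD : ∀ j, MeasurableSet[ℱ j] (D j)) (hE : ∀ j, MeasurableSet[ℱ j] (E j)) {n : ℕ}
    (hDdec : D (n + 1) ⊆ D n)
    (hcond : ∀ᵐ ω ∂P, ω ∈ D n → p ≤ P[(E (n + 1)).indicator (fun _ => (1 : ℝ)) | ℱ n] ω) :
    ∫ ω, survivalWeight D E (n + 1) ω ∂P ≤ (1 - p / 2) * ∫ ω, survivalWeight D E n ω ∂P := by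
  have hW := integrable_survivalWeight (P := P) ℱ hD hE n
  have hgood := mul_integral_le_integral_indicator_of_le_condExp (ℱ.le n)
    (stronglyMeasurable_survivalWeight ℱ hD hE n) hW (survivalWeight_nonneg n)
    (ℱ.le _ _ (hE (n + 1))) (hcond.mono fun ω h hWω => h (Set.mem_of_indicator_ne_zero hWω))
  calc ∫ ω, survivalWeight D E (n + 1) ω ∂P
      ≤ ∫ ω, survivalWeight D E n ω - 2⁻¹ * (E (n + 1)).indicator (survivalWeight D E n) ω ∂P :=
        integral_mono (integrable_survivalWeight ℱ hD hE (n + 1))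
          (hW.sub ((hW.indicator (ℱ.le _ _ (hE (n + 1)))).const_mul _))
          (survivalWeight_succ_le hDdec)
    _ = ∫ ω, survivalWeight D E n ω ∂P -
          2⁻¹ * ∫ ω, (E (n + 1)).indicator (survivalWeight D E n) ω ∂P := by
        rw [integral_sub hW ((hW.indicator (ℱ.le _ _ (hE (n + 1)))).const_mul _),
          integral_const_mul]
    _ ≤ (1 - p / 2) * ∫ ω, survivalWeight D E n ω ∂P := by linarith

theorem integral_survivalWeight_le_exp {P : Measure Ω} [IsProbabilityMeasure P] {p : ℝ}
    (hD : ∀ j, MeasurableSet[ℱ j] (D j)) (hE : ∀ j, MeasurableSet[ℱ j] (E j))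
    (hDdec : ∀ j, D (j + 1) ⊆ D j) {n : ℕ}
    (hcond : ∀ j < n, ∀ᵐ ω ∂P, ω ∈ D j →
      p ≤ P[(E (j + 1)).indicator (fun _ => (1 : ℝ)) | ℱ j] ω) :
    ∫ ω, survivalWeight D E n ω ∂P ≤ Real.exp (-(n * p / 2)) := by
  induction n with
  | zero =>
    rw [survivalWeight_zero, integral_indicator_const _ ((ℱ.le 0) _ (hD 0))]
    simp
  | succ n ih =>
    have hstep := integral_survivalWeight_succ_le ℱ hD hE (hDdec n) (hcond n n.lt_succ_self)
    have hint := integral_nonneg (μ := P) (survivalWeight_nonneg (D := D) (E := E) n)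
    calc ∫ ω, survivalWeight D E (n + 1) ω ∂P
        ≤ Real.exp (-(p / 2)) * ∫ ω, survivalWeight D E n ω ∂P :=
          hstep.trans (mul_le_mul_of_nonneg_right
            (by linarith [Real.add_one_le_exp (-(p / 2))]) hint)
      _ ≤ Real.exp (-(p / 2)) * Real.exp (-(n * p / 2)) :=
          mul_le_mul_of_nonneg_left (ih fun j hj => hcond j (hj.trans n.lt_succ_self))
            (Real.exp_nonneg _)
      _ = Real.exp (-((n + 1 : ℕ) * p / 2)) := by rw [← Real.exp_add]; push_cast; ring_nf

theorem measureReal_le_two_pow_mul_integral_survivalWeight {P : Measure Ω} [IsFiniteMeasure P]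
    (hD : ∀ j, MeasurableSet[ℱ j] (D j)) (hE : ∀ j, MeasurableSet[ℱ j] (E j)) {n T : ℕ}
    (hcount : ∀ ω ∈ D n, goodStepCount D E n ω ≤ T) :
    P.real (D n) ≤ 2 ^ T * ∫ ω, survivalWeight D E n ω ∂P := by
  have hle : (D n).indicator (fun _ => (1 : ℝ)) ≤ fun ω => 2 ^ T * survivalWeight D E n ω := by
    intro ω
    by_cases hω : ω ∈ D n
    · show (D n).indicator _ ω ≤ 2 ^ T * survivalWeight D E n ω
      rw [Set.indicator_of_mem hω, survivalWeight, Set.indicator_of_mem hω, inv_pow,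
        le_mul_inv_iff₀ (by positivity), one_mul]
      exact pow_le_pow_right₀ one_le_two (hcount ω hω)
    · rw [Set.indicator_of_notMem hω]
      exact mul_nonneg (by positivity) (survivalWeight_nonneg n ω)
  rw [← integral_indicator_one ((ℱ.le n) _ (hD n)), ← integral_const_mul]
  exact integral_mono ((integrable_const 1).indicator ((ℱ.le n) _ (hD n)))
    ((integrable_survivalWeight ℱ hD hE n).const_mul _) hle

end GoodSteps

theorem stmt17_general {Ω : Type*} {m0 : MeasurableSpace Ω} (P : Measure Ω)
    [IsProbabilityMeasure P] (ℱ : Filtration ℕ m0)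
    (Δ T : ℕ) (p : ℝ)
    (D E : ℕ → Set Ω)
    (hDmeas : ∀ j, MeasurableSet[ℱ j] (D j))
    (hEmeas : ∀ j, MeasurableSet[ℱ j] (E j))
    (hDdec : ∀ j, D (j + 1) ⊆ D j)
    (hcond : ∀ j, 1 ≤ j → j ≤ Δ → ∀ᵐ ω ∂P, ω ∈ D (j - 1) →
      p ≤ (P[(E j).indicator (fun _ => (1 : ℝ)) | ℱ (j - 1)]) ω)
    (hdet : ∀ ω : Ω,
      ((Finset.Icc 1 Δ).filter (fun j => ω ∈ E j ∧ ω ∈ D (j - 1))).card ≤ T)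
    (hΔ : 4 * ((T : ℝ) + 1) ≤ (Δ : ℝ) * p) :
    P (D Δ) ≤ ENNReal.ofReal (Real.exp (-((Δ : ℝ) * p) / 8)) := by
  have hdecay := integral_survivalWeight_le_exp (P := P) ℱ hDmeas hEmeas hDdec (n := Δ)
    fun j hj => by simpa using hcond (j + 1) (by omega) (by omega)
  rw [← ofReal_measureReal]
  refine ENNReal.ofReal_le_ofReal ?_
  calc P.real (D Δ) ≤ 2 ^ T * ∫ ω, survivalWeight D E Δ ω ∂P :=
        measureReal_le_two_pow_mul_integral_survivalWeight ℱ hDmeas hEmeas fun ω _ => hdet ω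
    _ ≤ 2 ^ T * Real.exp (-((Δ : ℝ) * p) / 2) := by
        rw [neg_div]; gcongr
    _ ≤ Real.exp (-((Δ : ℝ) * p) / 8) := two_pow_mul_exp_le_exp hΔ

/-- Abstract form of Lemma 2.1/3.1: `D j` are decreasing 'not yet done' events, `E j` are
'good step' events with conditional probability at least `p` on `D (j−1)`, and
deterministically at most `T` of the steps `j ≤ Δ` can be good while not yet done.
If `Δ ≥ 4(T+1)/p` then `P(D Δ) ≤ exp(−Δp/8)`. -/
theorem stmt17 {Ω : Type*} {m0 : MeasurableSpace Ω} (P : Measure Ω)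
    [IsProbabilityMeasure P] (ℱ : Filtration ℕ m0)
    (Δ T : ℕ) (p : ℝ) (hp0 : 0 < p) (hp1 : p ≤ 1)
    (D E : ℕ → Set Ω)
    (hDmeas : ∀ j, MeasurableSet[ℱ j] (D j))
    (hEmeas : ∀ j, MeasurableSet[ℱ j] (E j))
    (hDdec : ∀ j, D (j + 1) ⊆ D j)
    (hcond : ∀ j, 1 ≤ j → j ≤ Δ → ∀ᵐ ω ∂P, ω ∈ D (j - 1) →
      p ≤ (P[(E j).indicator (fun _ => (1 : ℝ)) | ℱ (j - 1)]) ω)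
    (hdet : ∀ ω : Ω,
      ((Finset.Icc 1 Δ).filter (fun j => ω ∈ E j ∧ ω ∈ D (j - 1))).card ≤ T)
    (hΔ : 4 * ((T : ℝ) + 1) ≤ (Δ : ℝ) * p) :
    P (D Δ) ≤ ENNReal.ofReal (Real.exp (-((Δ : ℝ) * p) / 8)) :=
  stmt17_general P ℱ Δ T p D E hDmeas hEmeas hDdec hcond hdet hΔ
end
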